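/- The map sending a maximal chain X of Q, with source s and sink t, to the one-dimensional subspace of A spanned by the path a_{ts}, is a bijection between the set of maximal chains of Q and the set of simple sub-bimodules of the A-A-bimodule A (equivalently, the minimal nonzero two-sided ideals of A); these are exactly the simple sub-bimodules in the socle of the bimodule A. -/

import Mathlib

set_option maxHeartbeats 1000000
set_option synthInstance.maxHeartbeats 400000

namespace DPF

open Matrix

/-- A finite quiver on `Fin n` (given by an arrow relation, no loops, no two-cycles)
whose underlying (undirected simple) graph is a tree. -/
structure TreeQuiver (n : ℕ) : Type where
  arr : Fin n → Fin n → Prop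
  loopless : ∀ i, ¬ arr i i
  oneway : ∀ i j, arr i j → ¬ arr j i
  isTree : (SimpleGraph.fromRel arr).IsTree

namespace TreeQuiver

variable {n : ℕ}

/-- The underlying simple graph of the quiver. -/
def G (Q : TreeQuiver n) : SimpleGraph (Fin n) := SimpleGraph.fromRel Q.arr

/-- `Q.Reach i j` : `j` is a successor of `i`, i.e. there is an oriented
(possibly trivial) path from `i` to `j`. -/
def Reach (Q : TreeQuiver n) (i j : Fin n) : Prop := Relation.ReflTransGen Q.arr i j

/-- `i` is a sink (no outgoing arrows). -/
def IsSink (Q : TreeQuiver n) (i : Fin n) : Prop := ∀ j, ¬ Q.arr i j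

/-- `i` is a source (no incoming arrows). -/
def IsSource (Q : TreeQuiver n) (i : Fin n) : Prop := ∀ j, ¬ Q.arr j i

/-- The degree of a vertex in the underlying graph. -/
noncomputable def deg (Q : TreeQuiver n) (i : Fin n) : ℕ := {j | Q.G.Adj i j}.ncard

/-- `i ∈ K(Q)`: `i` is a sink or a source. -/
def inK (Q : TreeQuiver n) (i : Fin n) : Prop := Q.IsSink i ∨ Q.IsSource i

/-- `i ∈ K'(Q)`: a sink or a source of degree at least 2. -/
def inK' (Q : TreeQuiver n) (i : Fin n) : Prop := Q.inK i ∧ 2 ≤ Q.deg i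

/-- `Q` is admissible: all vertices of degree at least 3 are sinks or sources. -/
def Admissible (Q : TreeQuiver n) : Prop := ∀ i, 3 ≤ Q.deg i → Q.inK i

/-- A maximal chain of `Q` is (the oriented path between) a pair `(s, t)` where `s` is a
source, `t` is a sink, and `t` is reachable from `s`. -/
def IsMaxChain (Q : TreeQuiver n) (s t : Fin n) : Prop :=
  Q.IsSource s ∧ Q.IsSink t ∧ Q.Reach s t

/-- The vertex set of a chain from `s` to `t`. -/
def chainSet (Q : TreeQuiver n) (s t : Fin n) : Set (Fin n) := {v | Q.Reach s v ∧ Q.Reach v t}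

/-- The vertex set of the union of a collection `S` of (maximal) chains, i.e. of the
corresponding "support" subgraph. -/
def suppVerts (Q : TreeQuiver n) (S : Set (Fin n × Fin n)) : Set (Fin n) :=
  {v | ∃ c ∈ S, v ∈ Q.chainSet c.1 c.2}

/-- The adjacency relation of the subgraph given by the union of the chains in `S`. -/
def suppAdj (Q : TreeQuiver n) (S : Set (Fin n × Fin n)) (i j : Fin n) : Prop :=
  Q.G.Adj i j ∧ ∃ c ∈ S, i ∈ Q.chainSet c.1 c.2 ∧ j ∈ Q.chainSet c.1 c.2

/-- The degree of a vertex in the subgraph given by the union of the chains in `S`. -/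
noncomputable def suppDeg (Q : TreeQuiver n) (S : Set (Fin n × Fin n)) (i : Fin n) : ℕ :=
  {j | Q.suppAdj S i j}.ncard

/-- The subgraph given by the union of the chains in `S` is connected. -/
def SuppConnected (Q : TreeQuiver n) (S : Set (Fin n × Fin n)) : Prop :=
  ∀ u ∈ Q.suppVerts S, ∀ v ∈ Q.suppVerts S, Relation.ReflTransGen (Q.suppAdj S) u v

/-- The two unions of (maximal) chains `S`, `T` are equal as subgraphs of `Q`. -/
def SuppEq (Q : TreeQuiver n) (S T : Set (Fin n × Fin n)) : Prop :=
  Q.suppVerts S = Q.suppVerts T ∧ ∀ i j, Q.suppAdj S i j ↔ Q.suppAdj T i j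

/-- A path function: `α i` is a successor of `i` or `0` (here: `none`). -/
def IsPathFun (Q : TreeQuiver n) (α : Fin n → Option (Fin n)) : Prop :=
  ∀ i j, α i = some j → Q.Reach i j

/-- Monotonicity of a path function. -/
def MonotoneFun (Q : TreeQuiver n) (α : Fin n → Option (Fin n)) : Prop :=
  ∀ i j x, Q.Reach j i → α i = some x → ∃ y, α j = some y ∧ Q.Reach y x

/-- The support of a function `α : Q₀ → Q₀ ∪ {0}`: the set of maximal chains containing
some value of `α`. -/
def suppF (Q : TreeQuiver n) (α : Fin n → Option (Fin n)) : Set (Fin n × Fin n) :=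
  {c | Q.IsMaxChain c.1 c.2 ∧ ∃ i x, α i = some x ∧ x ∈ Q.chainSet c.1 c.2}

/-- A special function: a monotone path function with connected support such that any
sink-or-source vertex of the support sent to `0` has degree `1` in the support. -/
def SpecialFun (Q : TreeQuiver n) (α : Fin n → Option (Fin n)) : Prop :=
  Q.IsPathFun α ∧ Q.MonotoneFun α ∧ Q.SuppConnected (Q.suppF α) ∧
    ∀ i, Q.inK i → i ∈ Q.suppVerts (Q.suppF α) → α i = none → Q.suppDeg (Q.suppF α) i = 1

/-- `Q.Gamma s t`: the vertex set of the connected component of `t` in the graph obtained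
from `Q` by deleting the vertex `s`. -/
def Gamma (Q : TreeQuiver n) (s t : Fin n) : Set (Fin n) :=
  {v | Relation.ReflTransGen (fun a b => Q.G.Adj a b ∧ a ≠ s ∧ b ≠ s) t v}

end TreeQuiver

open TreeQuiver

section Algebra

variable {n : ℕ} (Q : TreeQuiver n) (k : Type) [Field k]

/-- The path algebra of the tree quiver `Q` over `k`, realized concretely as the
subalgebra of `Matrix (Fin n) (Fin n) k` of matrices supported on the reachability
relation; the matrix unit in position `(j, i)` corresponds to the unique path
`a_{ji}` from `i` to `j`. -/
def pathAlg : Subalgebra k (Matrix (Fin n) (Fin n) k) where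
  carrier := {x | ∀ i j, ¬ Q.Reach j i → x i j = 0}
  mul_mem' := by
    intro x y hx hy i j hij
    rw [Matrix.mul_apply]
    refine Finset.sum_eq_zero fun m _ => ?_
    by_cases h1 : Q.Reach m i
    · have h2 : ¬ Q.Reach j m := fun h2 => hij (Relation.ReflTransGen.trans h2 h1)
      rw [hy m j h2, mul_zero]
    · rw [hx i m h1, zero_mul]
  one_mem' := by
    intro i j hij
    have hne : i ≠ j := by rintro rfl; exact hij Relation.ReflTransGen.refl
    exact Matrix.one_apply_ne hne
  add_mem' := by
    intro x y hx hy i j hij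
    simp only [Matrix.add_apply, hx i j hij, hy i j hij, add_zero]
  zero_mem' := by intro i j hij; rfl
  algebraMap_mem' := by
    intro r i j hij
    have hne : i ≠ j := by rintro rfl; exact hij Relation.ReflTransGen.refl
    simp [Matrix.algebraMap_matrix_apply, hne]

theorem std_mem (t s : Fin n) (h : Q.Reach s t) :
    Matrix.single t s (1 : k) ∈ pathAlg Q k := by
  intro i j hij
  by_cases h1 : t = i ∧ s = j
  · obtain ⟨rfl, rfl⟩ := h1
    exact absurd h hij
  · simp only [Matrix.single, Matrix.of_apply, if_neg h1]

/-- The path `a_{ts}` from `s` to `t`, as an element of the path algebra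
(by convention `0` if `t` is not a successor of `s`). -/
noncomputable def aEl (t s : Fin n) : pathAlg Q k :=
  haveI := Classical.dec (Q.Reach s t)
  if h : Q.Reach s t then ⟨Matrix.single t s 1, std_mem Q k t s h⟩ else 0

/-- The trivial path `e_i` at the vertex `i`. -/
noncomputable def e (i : Fin n) : pathAlg Q k :=
  ⟨Matrix.single i i 1, std_mem Q k i i Relation.ReflTransGen.refl⟩

/-- `B` is a two-sided ideal of the path algebra, i.e. a sub-bimodule of the regular
`A`-`A`-bimodule `A`. -/
def IsIdeal (B : Submodule k ↥(pathAlg Q k)) : Prop :=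
  (∀ a : ↥(pathAlg Q k), ∀ x ∈ B, a * x ∈ B) ∧ (∀ a : ↥(pathAlg Q k), ∀ x ∈ B, x * a ∈ B)

/-- `B` is an indecomposable sub-bimodule of `A`: a nonzero two-sided ideal which does not
decompose as an (internal) direct sum of two nonzero sub-bimodules. -/
def Indec (B : Submodule k ↥(pathAlg Q k)) : Prop :=
  IsIdeal Q k B ∧ B ≠ ⊥ ∧
    ∀ B1 B2 : Submodule k ↥(pathAlg Q k), IsIdeal Q k B1 → IsIdeal Q k B2 →
      B1 ⊔ B2 = B → B1 ⊓ B2 = ⊥ → B1 = ⊥ ∨ B2 = ⊥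

/-- The support of a two-sided ideal `B`: the set of maximal chains `(s, t)` of `Q`
such that `a_{ts} ∈ B`. -/
def suppB (B : Submodule k ↥(pathAlg Q k)) : Set (Fin n × Fin n) :=
  {c | Q.IsMaxChain c.1 c.2 ∧ aEl Q k c.2 c.1 ∈ B}

/-- The indecomposable projective left module `P_j = A e_j`, as a left ideal of `A`. -/
def Pmod (j : Fin n) : Submodule ↥(pathAlg Q k) ↥(pathAlg Q k) where
  carrier := {x | x * e Q k j = x}
  add_mem' := by
    intro a b ha hb
    show (a + b) * e Q k j = a + b
    rw [add_mul]
    rw [show a * e Q k j = a from ha, show b * e Q k j = b from hb]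
  zero_mem' := by
    show (0 : ↥(pathAlg Q k)) * e Q k j = 0
    rw [zero_mul]
  smul_mem' := by
    intro c x hx
    show (c • x) * e Q k j = c • x
    rw [smul_eq_mul, mul_assoc, show x * e Q k j = x from hx]

/-- `B e_i`, as a left ideal (left `A`-submodule) of `A`; here `B` is a two-sided ideal. -/
def BeiL (B : Submodule k ↥(pathAlg Q k)) (hB : IsIdeal Q k B) (i : Fin n) :
    Submodule ↥(pathAlg Q k) ↥(pathAlg Q k) where
  carrier := {x | x ∈ B ∧ x * e Q k i = x}
  add_mem' := by
    intro a b ha hb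
    exact ⟨B.add_mem ha.1 hb.1, by rw [add_mul, ha.2, hb.2]⟩
  zero_mem' := ⟨B.zero_mem, by rw [zero_mul]⟩
  smul_mem' := by
    intro c x hx
    refine ⟨?_, ?_⟩
    · show c * x ∈ B
      exact hB.1 c x hx.1
    · show (c • x) * e Q k i = c • x
      rw [smul_eq_mul, mul_assoc, hx.2]

/-- A left `A`-submodule `N` of `A` is (zero or) indecomposable. -/
def IndecL (N : Submodule ↥(pathAlg Q k) ↥(pathAlg Q k)) : Prop :=
  N ≠ ⊥ ∧ ∀ N1 N2 : Submodule ↥(pathAlg Q k) ↥(pathAlg Q k),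
    N1 ⊔ N2 = N → N1 ⊓ N2 = ⊥ → N1 = ⊥ ∨ N2 = ⊥

/-- `x` is "the" function `x_B` associated to the indecomposable sub-bimodule `B`:
`x i = none` iff `B e_i = 0`, and `x i = some j` implies `B e_i ≅ P_j` as left `A`-modules. -/
def IsXB (B : Submodule k ↥(pathAlg Q k)) (hB : IsIdeal Q k B) (x : Fin n → Option (Fin n)) :
    Prop :=
  ∀ i, (x i = none ↔ BeiL Q k B hB i = ⊥) ∧
    ∀ j, x i = some j →
      Nonempty (↥(BeiL Q k B hB i) ≃ₗ[↥(pathAlg Q k)] ↥(Pmod Q k j))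

/-- The subspace `B_x` of `A` associated to a (special) function `x` : the `k`-linear span
of all paths `a_{ts}` with `x s ≠ 0` and `t` a successor of `x s`. -/
def Bspan (x : Fin n → Option (Fin n)) : Submodule k ↥(pathAlg Q k) :=
  Submodule.span k {v | ∃ s xs t, x s = some xs ∧ Q.Reach xs t ∧ v = aEl Q k t s}

/-- The two-sided ideal `J_i`: the span of all paths of `Q` except the trivial path `e_i`. -/
def J (i : Fin n) : Submodule k ↥(pathAlg Q k) :=
  Submodule.span k {v | ∃ t s, Q.Reach s t ∧ ¬(t = i ∧ s = i) ∧ v = aEl Q k t s}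

/-- The indecomposable direct summand `J_s^{(q)}` of `J_s` corresponding to the connected
component (of `Q` with `s` deleted) containing the neighbour `t` of `s`: the span of all
paths `a_{pq}` with `p, q ∈ Γ^{(t)} ∪ {s}` other than `e_s`. -/
def Jc (s t : Fin n) : Submodule k ↥(pathAlg Q k) :=
  Submodule.span k {v | ∃ p q, Q.Reach q p ∧ p ∈ Q.Gamma s t ∪ {s} ∧ q ∈ Q.Gamma s t ∪ {s} ∧
    ¬(p = s ∧ q = s) ∧ v = aEl Q k p q}

end Algebra

section Tensor

open TensorProduct

/-- The multiplication map `I ⊗_k J → A` for two `k`-subspaces `I`, `J` of a `k`-algebra `A`. -/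
noncomputable def mulMap (k A : Type) [CommRing k] [Ring A] [Algebra k A]
    (I J : Submodule k A) : (↥I ⊗[k] ↥J) →ₗ[k] A :=
  TensorProduct.lift (LinearMap.compl₁₂ (LinearMap.mul k A) I.subtype J.subtype)

/-- The submodule of `I ⊗_k J` spanned by the "balancing" relators `ba ⊗ d - b ⊗ ad`;
the quotient of `I ⊗_k J` by it is `I ⊗_A J`, so the multiplication map
`I ⊗_A J → A` is injective if and only if the kernel of `mulMap` equals `balRel`. -/
noncomputable def balRel (k A : Type) [CommRing k] [Ring A] [Algebra k A]
    (I J : Submodule k A) : Submodule k (↥I ⊗[k] ↥J) :=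
  Submodule.span k {z | ∃ (b : I) (d : J) (a : A) (h1 : (b : A) * a ∈ I) (h2 : a * (d : A) ∈ J),
    z = (⟨(b : A) * a, h1⟩ : I) ⊗ₜ[k] d - (b ⊗ₜ[k] (⟨a * (d : A), h2⟩ : J))}

end Tensor

/-! The path algebra of a tree quiver is the algebra of matrices supported on the reachability
relation, with the paths `a_{ts}` as matrix units. If `s` is a source and `t` a sink, then
`x a_{ts} = x_{tt} a_{ts}` and `a_{ts} x = x_{ss} a_{ts}`, so `k a_{ts}` is a one-dimensional,
hence simple, ideal. Conversely a nonzero ideal contains `e_j x e_i = x_{ji} a_{ji}` for a nonzero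
entry of some `x`, hence a path `a_{ji}`; composing it with a path from `j` to a sink `t` and
a path from a source `s` to `i` puts `a_{ts}` in the ideal, which is therefore `k a_{ts}`
if it is simple. -/

lemma _root_.Relation.exists_reflTransGen_forall_not {α : Type*} [Finite α] {r : α → α → Prop}
    (hr : ∀ a, ¬ Relation.TransGen r a a) (a : α) :
    ∃ b, Relation.ReflTransGen r a b ∧ ∀ c, ¬ r b c := by
  let follows := Function.swap (Relation.TransGen r)
  have : Std.Irrefl follows := ⟨hr⟩
  obtain ⟨b, hab, hmax⟩ := (Finite.wellFounded_of_trans_of_irrefl follows).has_min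
    {b | Relation.ReflTransGen r a b} ⟨a, .refl⟩
  exact ⟨b, hab, fun c hbc => hmax c (hab.tail hbc) (.single hbc)⟩

namespace TreeQuiver

variable {n : ℕ} {Q : TreeQuiver n}

lemma adj_of_arr {i j : Fin n} (h : Q.arr i j) : Q.G.Adj i j :=
  (SimpleGraph.fromRel_adj Q.arr i j).2 ⟨fun hij => Q.loopless i (hij ▸ h), Or.inl h⟩

lemma Reach.exists_walk {i j : Fin n} (h : Q.Reach i j) :
    ∃ W : Q.G.Walk i j, ∀ d ∈ W.darts, Q.arr d.fst d.snd := by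
  induction h using Relation.ReflTransGen.head_induction_on with
  | refl => exact ⟨.nil, by simp⟩
  | head hij _ ih =>
    obtain ⟨W, hW⟩ := ih
    refine ⟨.cons (adj_of_arr hij) W, fun d hd => ?_⟩
    rcases List.mem_cons.1 hd with rfl | hd
    exacts [hij, hW d hd]

/-- An oriented cycle through `i` would start with an arrow `i → c`; the path it gives back
from `c` to `i` is, in a tree, the single edge `c — i`, which would then be an arrow `c → i`. -/
lemma not_transGen_arr_self (i : Fin n) : ¬ Relation.TransGen Q.arr i i := by
  intro h
  obtain ⟨c, hic, hci⟩ := Relation.TransGen.head'_iff.1 h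
  obtain ⟨W, hW⟩ := Reach.exists_walk hci
  have hedge := (adj_of_arr hic).symm
  have hpath : W.bypass = hedge.toWalk :=
    (Q.isTree.existsUnique_path c i).unique W.bypass_isPath hedge.isPath_toWalk
  have hdart : (⟨(c, i), hedge⟩ : Q.G.Dart) ∈ W.darts :=
    W.darts_bypass_subset_darts (by simp [hpath])
  exact Q.oneway i c hic (hW _ hdart)

lemma exists_isSink_reach (i : Fin n) : ∃ t, Q.IsSink t ∧ Q.Reach i t := by
  obtain ⟨t, hit, ht⟩ := Relation.exists_reflTransGen_forall_not not_transGen_arr_self i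
  exact ⟨t, ht, hit⟩

lemma exists_isSource_reach (i : Fin n) : ∃ s, Q.IsSource s ∧ Q.Reach s i := by
  obtain ⟨s, his, hs⟩ := Relation.exists_reflTransGen_forall_not (r := Function.swap Q.arr)
    (fun a ha => not_transGen_arr_self a (Relation.transGen_swap.1 ha)) i
  exact ⟨s, hs, Relation.reflTransGen_swap.1 his⟩

lemma IsSink.eq_of_reach {t i : Fin n} (ht : Q.IsSink t) (h : Q.Reach t i) : i = t := by
  rcases Relation.ReflTransGen.cases_head h with rfl | ⟨c, htc, -⟩
  exacts [rfl, absurd htc (ht c)]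

lemma IsSource.eq_of_reach {s i : Fin n} (hs : Q.IsSource s) (h : Q.Reach i s) : i = s := by
  rcases Relation.ReflTransGen.cases_tail h with rfl | ⟨c, -, hcs⟩
  exacts [rfl, absurd hcs (hs c)]

end TreeQuiver

section PathAlgebra

variable {n : ℕ} {Q : TreeQuiver n} {k : Type} [Field k]

lemma coe_aEl {s t : Fin n} (h : Q.Reach s t) :
    (aEl Q k t s : Matrix (Fin n) (Fin n) k) = Matrix.single t s 1 := by
  rw [aEl, dif_pos h]

lemma aEl_of_not_reach {s t : Fin n} (h : ¬ Q.Reach s t) : aEl Q k t s = 0 := by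
  rw [aEl, dif_neg h]

lemma aEl_ne_zero {s t : Fin n} (h : Q.Reach s t) : aEl Q k t s ≠ 0 := fun h0 => by
  simpa [h0] using congrFun₂ (coe_aEl (k := k) h) t s

lemma aEl_mul_aEl {i j t : Fin n} (hij : Q.Reach i j) (hjt : Q.Reach j t) :
    aEl Q k t j * aEl Q k j i = aEl Q k t i :=
  Subtype.ext (by simp [coe_aEl hij, coe_aEl hjt, coe_aEl (hij.trans hjt)])

lemma e_mul_mul_e (x : pathAlg Q k) (j i : Fin n) :
    e Q k j * x * e Q k i = (x : Matrix (Fin n) (Fin n) k) j i • aEl Q k j i := by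
  by_cases h : Q.Reach i j
  · exact Subtype.ext (by simp [e, coe_aEl h])
  · rw [x.2 j i h, zero_smul]
    exact Subtype.ext (by simp [e, x.2 j i h])

lemma mul_aEl_of_isSink {t : Fin n} (ht : Q.IsSink t) (x : pathAlg Q k) (s : Fin n) :
    x * aEl Q k t s = (x : Matrix (Fin n) (Fin n) k) t t • aEl Q k t s := by
  by_cases h : Q.Reach s t
  · refine Subtype.ext ?_
    ext a b
    have hcol : (x : Matrix (Fin n) (Fin n) k) a t = if a = t then x.1 t t else 0 := by
      split_ifs with hat
      · rw [hat]
      · exact x.2 a t fun hta => hat (ht.eq_of_reach hta)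
    by_cases hb : b = s
    · simp [coe_aEl h, Matrix.mul_apply, Matrix.single_apply, hb, hcol, eq_comm]
    · simp [coe_aEl h, Matrix.mul_apply, Ne.symm hb]
  · simp [aEl_of_not_reach h]

lemma aEl_mul_of_isSource {s : Fin n} (hs : Q.IsSource s) (x : pathAlg Q k) (t : Fin n) :
    aEl Q k t s * x = (x : Matrix (Fin n) (Fin n) k) s s • aEl Q k t s := by
  by_cases h : Q.Reach s t
  · refine Subtype.ext ?_
    ext a b
    have hrow : (x : Matrix (Fin n) (Fin n) k) s b = if b = s then x.1 s s else 0 := by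
      split_ifs with hbs
      · rw [hbs]
      · exact x.2 s b fun hbs' => hbs (hs.eq_of_reach hbs')
    by_cases ha : a = t
    · simp [coe_aEl h, Matrix.mul_apply, Matrix.single_apply, ha, hrow, eq_comm]
    · simp [coe_aEl h, Matrix.mul_apply, Ne.symm ha]
  · simp [aEl_of_not_reach h]

lemma eq_of_aEl_mem_span_aEl {s t s' t' : Fin n} (h : Q.Reach s t)
    (hmem : aEl Q k t s ∈ Submodule.span k {aEl Q k t' s'}) : s = s' ∧ t = t' := by
  obtain ⟨c, hc⟩ := Submodule.mem_span_singleton.1 hmem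
  by_cases h' : Q.Reach s' t'
  · have hentry := congrFun₂ (congrArg Subtype.val hc) t s
    by_contra hne
    simp [coe_aEl h, coe_aEl h', eq_comm, and_comm, hne] at hentry
  · rw [aEl_of_not_reach h', smul_zero] at hc
    exact absurd hc.symm (aEl_ne_zero h)

lemma isIdeal_span_aEl {s t : Fin n} (h : Q.IsMaxChain s t) :
    IsIdeal Q k (Submodule.span k {aEl Q k t s}) := by
  refine ⟨fun a x hx => ?_, fun a x hx => ?_⟩ <;>
    obtain ⟨c, rfl⟩ := Submodule.mem_span_singleton.1 hx
  · rw [mul_smul_comm, mul_aEl_of_isSink h.2.1, smul_smul]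
    exact Submodule.smul_mem _ _ (Submodule.mem_span_singleton_self _)
  · rw [smul_mul_assoc, aEl_mul_of_isSource h.1, smul_smul]
    exact Submodule.smul_mem _ _ (Submodule.mem_span_singleton_self _)

namespace IsIdeal

variable {S : Submodule k (pathAlg Q k)}

lemma exists_aEl_mem (hS : IsIdeal Q k S) (hne : S ≠ ⊥) :
    ∃ i j, Q.Reach i j ∧ aEl Q k j i ∈ S := by
  obtain ⟨x, hxS, hx0⟩ := (Submodule.ne_bot_iff S).1 hne
  obtain ⟨j, i, hji⟩ : ∃ j i, (x : Matrix (Fin n) (Fin n) k) j i ≠ 0 := by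
    by_contra! hx
    exact hx0 (Subtype.ext (Matrix.ext hx))
  refine ⟨i, j, not_not.1 (mt (x.2 j i) hji), ?_⟩
  have hcorner := S.smul_mem (x.1 j i)⁻¹ (hS.2 (e Q k i) _ (hS.1 (e Q k j) x hxS))
  rwa [e_mul_mul_e, smul_smul, inv_mul_cancel₀ hji, one_smul] at hcorner

lemma aEl_mem_of_reach (hS : IsIdeal Q k S) {i j s t : Fin n} (hij : Q.Reach i j)
    (hmem : aEl Q k j i ∈ S) (hjt : Q.Reach j t) (hsi : Q.Reach s i) : aEl Q k t s ∈ S := by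
  have hprod := hS.2 (aEl Q k i s) _ (hS.1 (aEl Q k t j) _ hmem)
  rwa [aEl_mul_aEl hij hjt, aEl_mul_aEl hsi (hij.trans hjt)] at hprod

lemma exists_isMaxChain_aEl_mem (hS : IsIdeal Q k S) (hne : S ≠ ⊥) :
    ∃ s t, Q.IsMaxChain s t ∧ aEl Q k t s ∈ S := by
  obtain ⟨i, j, hij, hmem⟩ := hS.exists_aEl_mem hne
  obtain ⟨t, ht, hjt⟩ := TreeQuiver.exists_isSink_reach (Q := Q) j
  obtain ⟨s, hs, hsi⟩ := TreeQuiver.exists_isSource_reach (Q := Q) i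
  exact ⟨s, t, ⟨hs, ht, hsi.trans (hij.trans hjt)⟩, hS.aEl_mem_of_reach hij hmem hjt hsi⟩

end IsIdeal

end PathAlgebra

theorem statement8_general {n : ℕ} (k : Type) [Field k]
    (Q : TreeQuiver n) :
    Set.BijOn (fun c : Fin n × Fin n => Submodule.span k {aEl Q k c.2 c.1})
      {c : Fin n × Fin n | Q.IsMaxChain c.1 c.2}
      {S : Submodule k ↥(pathAlg Q k) | IsIdeal Q k S ∧ S ≠ ⊥ ∧
        ∀ T : Submodule k ↥(pathAlg Q k), IsIdeal Q k T → T ≤ S → T = ⊥ ∨ T = S} := by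
  have hsimple {s t : Fin n} (h : Q.IsMaxChain s t) :
      IsIdeal Q k (Submodule.span k {aEl Q k t s}) ∧ Submodule.span k {aEl Q k t s} ≠ ⊥ ∧
        ∀ T : Submodule k ↥(pathAlg Q k), IsIdeal Q k T → T ≤ Submodule.span k {aEl Q k t s} →
          T = ⊥ ∨ T = Submodule.span k {aEl Q k t s} :=
    have hatom := nonzero_span_atom _ (aEl_ne_zero (k := k) h.2.2)
    ⟨isIdeal_span_aEl h, hatom.1, fun _ _ hT => hatom.le_iff.1 hT⟩
  refine ⟨fun c hc => hsimple hc, ?_, ?_⟩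
  · rintro ⟨s, t⟩ hc ⟨s', t'⟩ - (heq : Submodule.span k _ = Submodule.span k _)
    have hmem : aEl Q k t s ∈ Submodule.span k {aEl Q k t' s'} :=
      heq ▸ Submodule.mem_span_singleton_self _
    obtain ⟨rfl, rfl⟩ := eq_of_aEl_mem_span_aEl hc.2.2 hmem
    rfl
  · rintro S ⟨hS, hne, hmin⟩
    obtain ⟨s, t, hst, hmem⟩ := hS.exists_isMaxChain_aEl_mem hne
    have hle := (Submodule.span_singleton_le_iff_mem _ _).2 hmem
    exact ⟨(s, t), hst, (hmin _ (isIdeal_span_aEl hst) hle).resolve_left (hsimple hst).2.1⟩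

/-- The map sending a maximal chain (with source `s` and sink `t`) of `Q` to
the one-dimensional subspace of `A` spanned by the path `a_{ts}` is a bijection from the
set of maximal chains of `Q` onto the set of simple sub-bimodules of `A` (equivalently,
the minimal nonzero two-sided ideals of `A`); these are exactly the simple sub-bimodules
in the socle of the bimodule `A`. -/
theorem statement8 {n : ℕ} (k : Type) [Field k] [IsAlgClosed k] (hn : 1 < n)
    (Q : TreeQuiver n) (hadm : Q.Admissible) (hK' : ∃ s, Q.inK' s) :
    Set.BijOn (fun c : Fin n × Fin n => Submodule.span k {aEl Q k c.2 c.1})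
      {c : Fin n × Fin n | Q.IsMaxChain c.1 c.2}
      {S : Submodule k ↥(pathAlg Q k) | IsIdeal Q k S ∧ S ≠ ⊥ ∧
        ∀ T : Submodule k ↥(pathAlg Q k), IsIdeal Q k T → T ≤ S → T = ⊥ ∨ T = S} :=
  statement8_general k Q

end DPF
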